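/- Let U ⊆ ℝ^(n+2) be open, (ξ, N) a null frame on U, θ : U → ℝ differentiable and nowhere zero, and suppose the field Z := ξ + θ • N is closed conformal with factor φ : U → ℝ, i.e. fderiv ℝ Z p = φ(p) • id for all p ∈ U. Then for every p ∈ U and every screen vector v at p: (a) D_v θ(p) = 0 and τ_p(v) = 0; (b) A_N(p)(v) = -(1/θ(p)) • A*_ξ(p)(v) - (φ(p)/θ(p)) • v. (Flat-Minkowski-ambient form of the paper's theorem that a closed conformal field which is nowhere tangent and nowhere null induces a screen quasi-conformal structure with τ vanishing on the screen.) -/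

import Mathlib

/-!
Differentiating `Z = ξ + θ N` along a screen vector `v` gives `D_v ξ + θ D_v N + (D_v θ) N = φ v`.
Differentiating the frame relations `η(ξ,ξ) = 0`, `η(N,N) = 0`, `η(ξ,N) = 1` shows that `D_v ξ ⟂ ξ`,
`D_v N ⟂ N` and `η(D_v ξ, N) = -τ(v)`. Pairing the first identity with `N` then gives `τ(v) = 0`,
pairing it with `ξ` gives `D_v θ = 0`, and projecting it onto the screen gives
`θ P(D_v N) = φ v - P(D_v ξ)`, which is the quasi-conformality relation.
-/

open scoped BigOperators

noncomputable section

/-- Euclidean space `ℝ^m`. -/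
abbrev E (m : ℕ) : Type := EuclideanSpace ℝ (Fin m)

/-- The Minkowski bilinear form `η(x,y) = -(x 0)(y 0) + ∑_{i≥1} (x i)(y i)` on `ℝ^(n+2)`. -/
def eta {n : ℕ} (x y : E (n + 2)) : ℝ :=
  (∑ i, x i * y i) - 2 * (x 0 * y 0)

/-- Screen projection `P_p(w) = w - η(w,N)ξ - η(w,ξ)N` determined by the null frame at a point. -/
def sproj {n : ℕ} (xi N w : E (n + 2)) : E (n + 2) :=
  w - eta w N • xi - eta w xi • N

/-- Screen shape operator `A*_ξ(p)(v) = -P_p(D_v ξ (p))`. -/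
def Astar {n : ℕ} (xi N : E (n + 2) → E (n + 2)) (p v : E (n + 2)) : E (n + 2) :=
  -sproj (xi p) (N p) (fderiv ℝ xi p v)

/-- Shape operator `A_N(p)(v) = -P_p(D_v N (p))`. -/
def AN {n : ℕ} (xi N : E (n + 2) → E (n + 2)) (p v : E (n + 2)) : E (n + 2) :=
  -sproj (xi p) (N p) (fderiv ℝ N p v)

/-- Transversal one-form `τ_p(v) = η(D_v N(p), ξ p)`. -/
def tau {n : ℕ} (xi N : E (n + 2) → E (n + 2)) (p v : E (n + 2)) : ℝ :=
  eta (fderiv ℝ N p v) (xi p)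

/-- Screen part `Z*(p) = P_p(Z p)` of a vector field. -/
def Zstar {n : ℕ} (xi N Z : E (n + 2) → E (n + 2)) (p : E (n + 2)) : E (n + 2) :=
  sproj (xi p) (N p) (Z p)

/-- `A_{Z⊥}(p)(v) = η(Z p, N p) • A*_ξ(p)(v) + η(Z p, ξ p) • A_N(p)(v)`. -/
def AZperp {n : ℕ} (xi N Z : E (n + 2) → E (n + 2)) (p v : E (n + 2)) : E (n + 2) :=
  eta (Z p) (N p) • Astar xi N p v + eta (Z p) (xi p) • AN xi N p v

open Topology

section Minkowski

variable {n : ℕ}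

lemma eta_comm (x y : E (n + 2)) : eta x y = eta y x := by
  simp [eta, mul_comm]

lemma eta_add_left (x x' y : E (n + 2)) : eta (x + x') y = eta x y + eta x' y := by
  simp only [eta, PiLp.add_apply, add_mul, Finset.sum_add_distrib]
  ring

lemma eta_smul_left (c : ℝ) (x y : E (n + 2)) : eta (c • x) y = c * eta x y := by
  simp only [eta, PiLp.smul_apply, smul_eq_mul, mul_sub, Finset.mul_sum, mul_assoc]
  ring

lemma eta_sub_left (x x' y : E (n + 2)) : eta (x - x') y = eta x y - eta x' y := by
  simp only [eta, PiLp.sub_apply, sub_mul, Finset.sum_sub_distrib]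
  ring

def etaCLM : E (n + 2) →L[ℝ] E (n + 2) →L[ℝ] ℝ :=
  LinearMap.toContinuousLinearMap <| LinearMap.toContinuousLinearMap.toLinearMap ∘ₗ
    LinearMap.mk₂ ℝ eta eta_add_left (fun c x y => by rw [eta_smul_left]; rfl)
      (fun x y y' => by rw [eta_comm, eta_add_left, eta_comm y, eta_comm y'])
      (fun c x y => by rw [eta_comm, eta_smul_left, eta_comm]; rfl)

@[simp] lemma etaCLM_apply (x y : E (n + 2)) : etaCLM x y = eta x y := rfl

lemma fderiv_eta_apply {f g : E (n + 2) → E (n + 2)} {p : E (n + 2)}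
    (hf : DifferentiableAt ℝ f p) (hg : DifferentiableAt ℝ g p) (v : E (n + 2)) :
    fderiv ℝ (fun q => eta (f q) (g q)) p v
      = eta (fderiv ℝ f p v) (g p) + eta (f p) (fderiv ℝ g p v) := by
  rw [show (fun q => eta (f q) (g q)) = fun q => etaCLM (f q) (g q) from rfl,
    etaCLM.fderiv_of_bilinear hf hg]
  simp [add_comm]

lemma eta_fderiv_add_eta_fderiv_eq_zero {f g : E (n + 2) → E (n + 2)} {p : E (n + 2)} {c : ℝ}
    (hf : DifferentiableAt ℝ f p) (hg : DifferentiableAt ℝ g p)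
    (hc : (fun q => eta (f q) (g q)) =ᶠ[𝓝 p] fun _ => c) (v : E (n + 2)) :
    eta (fderiv ℝ f p v) (g p) + eta (f p) (fderiv ℝ g p v) = 0 := by
  rw [← fderiv_eta_apply hf hg, hc.fderiv_eq]
  simp

lemma eta_fderiv_self_eq_zero {f : E (n + 2) → E (n + 2)} {p : E (n + 2)} {c : ℝ}
    (hf : DifferentiableAt ℝ f p) (hc : (fun q => eta (f q) (f q)) =ᶠ[𝓝 p] fun _ => c)
    (v : E (n + 2)) :
    eta (fderiv ℝ f p v) (f p) = 0 := by
  have h := eta_fderiv_add_eta_fderiv_eq_zero hf hf hc v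
  rw [eta_comm (f p)] at h
  linarith

lemma sproj_smul (ξ N : E (n + 2)) (c : ℝ) (w : E (n + 2)) :
    sproj ξ N (c • w) = c • sproj ξ N w := by
  simp [sproj, eta_smul_left, smul_sub, mul_smul]

lemma sproj_sub (ξ N w w' : E (n + 2)) :
    sproj ξ N (w - w') = sproj ξ N w - sproj ξ N w' := by
  simp only [sproj, eta_sub_left, sub_smul]
  abel

lemma sproj_of_screen {ξ N v : E (n + 2)} (hvξ : eta v ξ = 0) (hvN : eta v N = 0) :
    sproj ξ N v = v := by
  simp [sproj, hvξ, hvN]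

end Minkowski

lemma fderiv_add_smul_apply {F : Type*} [NormedAddCommGroup F] [NormedSpace ℝ F]
    {G : Type*} [NormedAddCommGroup G] [NormedSpace ℝ G]
    {f g : F → G} {a : F → ℝ} {p : F} (hf : DifferentiableAt ℝ f p)
    (ha : DifferentiableAt ℝ a p) (hg : DifferentiableAt ℝ g p) (v : F) :
    fderiv ℝ (fun q => f q + a q • g q) p v
      = fderiv ℝ f p v + a p • fderiv ℝ g p v + fderiv ℝ a p v • g p := by
  rw [fderiv_fun_add (g := fun q => a q • g q) hf (ha.smul hg), fderiv_fun_smul ha hg]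
  simp [add_assoc]

section NullFrame

variable {n : ℕ} {ξ N ξ' N' v : E (n + 2)} {θ θ' φ : ℝ}

lemma cc_transversal_parts_eq_zero (hNN : eta N N = 0) (hξN : eta ξ N = 1)
    (hξξ' : eta ξ' ξ = 0) (hNN' : eta N' N = 0) (hξN' : eta ξ' N + eta ξ N' = 0)
    (hvξ : eta v ξ = 0) (hvN : eta v N = 0) (hZ : ξ' + θ • N' + θ' • N = φ • v) :
    θ' = 0 ∧ eta N' ξ = 0 := by
  have hN := congrArg (eta · N) hZ
  have hξ := congrArg (eta · ξ) hZ
  simp only [eta_add_left, eta_smul_left, hNN, hNN', hvN, hξξ', hvξ] at hN hξ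
  rw [eta_comm ξ N'] at hξN'
  rw [eta_comm N ξ, hξN] at hξ
  have hτ : eta N' ξ = 0 := by linarith
  refine ⟨?_, hτ⟩
  rw [hτ] at hξ
  linarith

lemma sproj_eq_of_add_smul_eq_smul (hθ : θ ≠ 0) (hvξ : eta v ξ = 0) (hvN : eta v N = 0)
    (hZ : ξ' + θ • N' = φ • v) :
    sproj ξ N N' = θ⁻¹ • (φ • v - sproj ξ N ξ') := by
  rw [eq_inv_smul_iff₀ hθ, ← sproj_smul, eq_sub_of_add_eq' hZ, sproj_sub, sproj_smul,
    sproj_of_screen hvξ hvN]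

end NullFrame

/-- A closed conformal field of the form `Z = ξ + θ N` (nowhere tangent,
nowhere null) induces a screen quasi-conformal structure with `τ` vanishing on the screen
(flat Minkowski ambient form). -/
theorem cc_field_induces_screen_quasi_conformal {n : ℕ}
    (U : Set (E (n + 2))) (hU : IsOpen U)
    (ξ N : E (n + 2) → E (n + 2)) (θ φ : E (n + 2) → ℝ)
    (hξd : ∀ p ∈ U, DifferentiableAt ℝ ξ p)
    (hNd : ∀ p ∈ U, DifferentiableAt ℝ N p)
    (hθd : ∀ p ∈ U, DifferentiableAt ℝ θ p)
    (hθ0 : ∀ p ∈ U, θ p ≠ 0)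
    (hξξ : ∀ p ∈ U, eta (ξ p) (ξ p) = 0)
    (hNN : ∀ p ∈ U, eta (N p) (N p) = 0)
    (hξN : ∀ p ∈ U, eta (ξ p) (N p) = 1)
    (hCC : ∀ p ∈ U, fderiv ℝ (fun q => ξ q + θ q • N q) p
      = φ p • ContinuousLinearMap.id ℝ (E (n + 2))) :
    ∀ p ∈ U, ∀ v : E (n + 2), eta v (ξ p) = 0 → eta v (N p) = 0 →
      (fderiv ℝ θ p v = 0 ∧ tau ξ N p v = 0) ∧
      AN ξ N p v = (-(1 / θ p)) • Astar ξ N p v - (φ p / θ p) • v := by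
  intro p hp v hvξ hvN
  have hpU : ∀ᶠ q in 𝓝 p, q ∈ U := hU.mem_nhds hp
  have hZ : fderiv ℝ ξ p v + θ p • fderiv ℝ N p v + fderiv ℝ θ p v • N p = φ p • v := by
    rw [← fderiv_add_smul_apply (hξd p hp) (hθd p hp) (hNd p hp), hCC p hp]
    rfl
  have hξξ' := eta_fderiv_self_eq_zero (hξd p hp) (hpU.mono hξξ) v
  have hNN' := eta_fderiv_self_eq_zero (hNd p hp) (hpU.mono hNN) v
  have hξN' := eta_fderiv_add_eta_fderiv_eq_zero (hξd p hp) (hNd p hp) (hpU.mono hξN) v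
  obtain ⟨hθ', hτ⟩ :=
    cc_transversal_parts_eq_zero (hNN p hp) (hξN p hp) hξξ' hNN' hξN' hvξ hvN hZ
  refine ⟨⟨hθ', hτ⟩, ?_⟩
  rw [hθ', zero_smul, add_zero] at hZ
  simp only [AN, Astar, sproj_eq_of_add_smul_eq_smul (hθ0 p hp) hvξ hvN hZ]
  match_scalars <;> field_simp

end
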